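/- arXiv:2605.29436 — 2 statements merged into one kernel-verified Lean document; each statement's English description precedes it below -/
import Mathlib

section
/- The Schatten 1/2-quasinorm ‖X‖_{1/2} = (Tr √X)² is superadditive on positive semidefinite matrices: for A, B ⪰ 0, ‖A + B‖_{1/2} ≥ ‖A‖_{1/2} + ‖B‖_{1/2}. -/
open ComplexOrder

/-- The positive semidefinite square root of a positive semidefinite matrix
(the definition removed from Mathlib, restored with its old meaning). -/
noncomputable def Matrix.PosSemidef.sqrt {n : Type*} [Fintype n] [DecidableEq n]
    {𝕜 : Type*} [RCLike 𝕜] {A : Matrix n n 𝕜} (hA : A.PosSemidef) : Matrix n n 𝕜 :=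
  hA.1.eigenvectorUnitary.1 * Matrix.diagonal ((↑) ∘ (√·) ∘ hA.1.eigenvalues) *
  (star hA.1.eigenvectorUnitary : Matrix n n 𝕜)

/-! For positive definite `Q`, Cauchy–Schwarz for the inner product `⟪X, Y⟫ = Tr (Y Q⁻¹ Xᴴ)`
applied to `√A` and `Q` gives `(Tr √A)² ≤ Tr Q · Tr (A Q⁻¹)`. Adding this to the same bound for `B`
gives `(Tr √A)² + (Tr √B)² ≤ Tr Q · Tr ((A + B) Q⁻¹)`, which is `(Tr √(A + B))²` for
`Q = √(A + B)`. Since `√(A + B)` may be singular, one takes `Q = √(A + B) + ε` instead, for which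
`Tr ((A + B) Q⁻¹) ≤ Tr Q`, and lets `ε → 0`. -/

namespace Matrix

open RCLike

variable {n 𝕜 : Type*} [RCLike 𝕜]

namespace PosSemidef

lemma posDef_add_smul_one [DecidableEq n] {S : Matrix n n 𝕜} (hS : S.PosSemidef) {ε : ℝ}
    (hε : 0 < ε) : (S + (ε : 𝕜) • 1).PosDef :=
  PosDef.posSemidef_add hS (PosDef.one.smul (ofReal_pos.mpr hε))

variable [Fintype n]

section sqrt

variable [DecidableEq n] {A : Matrix n n 𝕜} (hA : A.PosSemidef)

lemma sqrt_mul_self : hA.sqrt * hA.sqrt = A := by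
  set U : Matrix n n 𝕜 := hA.1.eigenvectorUnitary.1
  have hU : star U * U = 1 := Unitary.star_mul_self_of_mem hA.1.eigenvectorUnitary.2
  have hD : diagonal ((↑) ∘ (√·) ∘ hA.1.eigenvalues) * diagonal ((↑) ∘ (√·) ∘ hA.1.eigenvalues) =
      diagonal ((↑) ∘ hA.1.eigenvalues : n → 𝕜) := by
    rw [diagonal_mul_diagonal]
    congr 1
    funext i
    simp [← ofReal_mul, Real.mul_self_sqrt (hA.eigenvalues_nonneg i)]
  conv_rhs => rw [hA.1.spectral_theorem, Unitary.conjStarAlgAut_apply]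
  calc hA.sqrt * hA.sqrt
      = U * (diagonal ((↑) ∘ (√·) ∘ hA.1.eigenvalues) * (star U * U) *
          diagonal ((↑) ∘ (√·) ∘ hA.1.eigenvalues)) * star U := by
        simp only [sqrt, U, mul_assoc]
    _ = _ := by rw [hU, mul_one, hD]

lemma posSemidef_sqrt : hA.sqrt.PosSemidef := by
  have hD : (diagonal ((↑) ∘ (√·) ∘ hA.1.eigenvalues : n → 𝕜)).PosSemidef :=
    posSemidef_diagonal_iff.mpr fun i => by simp [Real.sqrt_nonneg]
  simpa [sqrt, ← star_eq_conjTranspose] using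
    hD.mul_mul_conjTranspose_same hA.1.eigenvectorUnitary.1

end sqrt

lemma trace_mul_nonneg {P R : Matrix n n 𝕜} (hP : P.PosSemidef) (hR : R.PosSemidef) :
    0 ≤ (P * R).trace := by
  classical
  have hRH : hR.sqrtᴴ = hR.sqrt := hR.posSemidef_sqrt.isHermitian.eq
  calc (0 : 𝕜) ≤ (hR.sqrt * P * hR.sqrtᴴ).trace :=
        (hP.mul_mul_conjTranspose_same hR.sqrt).trace_nonneg
    _ = (P * R).trace := by rw [hRH, trace_mul_cycle, hR.sqrt_mul_self, trace_mul_comm]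

lemma norm_trace_mul_mul_conjTranspose_sq_le {W : Matrix n n 𝕜} (hW : W.PosSemidef)
    (X Y : Matrix n n 𝕜) :
    ‖(Y * W * Xᴴ).trace‖ ^ 2 ≤ re (X * W * Xᴴ).trace * re (Y * W * Yᴴ).trace := by
  let _ := W.toMatrixSeminormedAddCommGroup hW
  let _ := W.toMatrixInnerProductSpace hW
  have hinner : ∀ U V : Matrix n n 𝕜, inner 𝕜 U V = (V * W * Uᴴ).trace := fun _ _ => rfl
  have := inner_mul_inner_self_le (𝕜 := 𝕜) X Y
  rwa [norm_inner_symm Y X, ← sq, hinner, hinner, hinner] at this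

lemma re_trace_sqrt_sq_le [DecidableEq n] {A Q : Matrix n n 𝕜} (hA : A.PosSemidef)
    (hQ : Q.PosDef) : re hA.sqrt.trace ^ 2 ≤ re Q.trace * re (A * Q⁻¹).trace := by
  have hQQ : Q * Q⁻¹ = 1 := mul_nonsing_inv Q (hQ.isUnit.map detMonoidHom)
  have cs := hQ.inv.posSemidef.norm_trace_mul_mul_conjTranspose_sq_le hA.sqrt Q
  rw [hA.posSemidef_sqrt.isHermitian.eq, hQ.isHermitian.eq, hQQ, one_mul, one_mul,
    trace_mul_cycle, hA.sqrt_mul_self, mul_comm (re (A * Q⁻¹).trace)] at cs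
  exact (sq_le_sq.mpr ((abs_re_le_norm _).trans (le_abs_self _))).trans cs

variable [DecidableEq n] {S : Matrix n n 𝕜} {ε : ℝ}

lemma re_trace_mul_self_mul_inv_add_smul_one_le (hS : S.PosSemidef) (hε : 0 < ε) :
    re (S * S * (S + (ε : 𝕜) • 1)⁻¹).trace ≤ re (S + (ε : 𝕜) • 1).trace := by
  set Q := S + (ε : 𝕜) • 1
  have hQ : Q.PosDef := hS.posDef_add_smul_one hε
  have hQQ : Q * Q⁻¹ = 1 := mul_nonsing_inv Q (hQ.isUnit.map detMonoidHom)
  have hSS : S * S = Q * Q - (ε : 𝕜) • (S + Q) := by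
    simp only [Q, add_mul, mul_add, smul_mul_assoc, mul_smul_comm, mul_one, one_mul, smul_add,
      smul_smul]
    abel
  have hSQ : S * S * Q⁻¹ = Q - (ε : 𝕜) • ((S + Q) * Q⁻¹) := by
    rw [hSS, sub_mul, smul_mul_assoc, mul_assoc, hQQ, mul_one]
  have hpos : 0 ≤ re ((S + Q) * Q⁻¹).trace :=
    (nonneg_iff.mp ((hS.add hQ.posSemidef).trace_mul_nonneg hQ.inv.posSemidef)).1
  rw [hSQ, trace_sub, trace_smul, map_sub, smul_eq_mul, re_ofReal_mul]
  exact sub_le_self _ (mul_nonneg hε.le hpos)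

lemma re_trace_sqrt_sq_add_re_trace_sqrt_sq_le {A B : Matrix n n 𝕜} (hA : A.PosSemidef)
    (hB : B.PosSemidef) (hAB : (A + B).PosSemidef) (hε : 0 < ε) :
    re hA.sqrt.trace ^ 2 + re hB.sqrt.trace ^ 2 ≤ re (hAB.sqrt + (ε : 𝕜) • 1).trace ^ 2 := by
  set Q := hAB.sqrt + (ε : 𝕜) • 1
  have hQ : Q.PosDef := hAB.posSemidef_sqrt.posDef_add_smul_one hε
  have hq : 0 ≤ re Q.trace := (nonneg_iff.mp hQ.posSemidef.trace_nonneg).1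
  calc re hA.sqrt.trace ^ 2 + re hB.sqrt.trace ^ 2
      ≤ re Q.trace * re (A * Q⁻¹).trace + re Q.trace * re (B * Q⁻¹).trace :=
        add_le_add (hA.re_trace_sqrt_sq_le hQ) (hB.re_trace_sqrt_sq_le hQ)
    _ = re Q.trace * re (hAB.sqrt * hAB.sqrt * Q⁻¹).trace := by
        rw [hAB.sqrt_mul_self, add_mul, trace_add (A * Q⁻¹), map_add, mul_add]
    _ ≤ re Q.trace * re Q.trace :=
        mul_le_mul_of_nonneg_left
          (hAB.posSemidef_sqrt.re_trace_mul_self_mul_inv_add_smul_one_le hε) hq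
    _ = re Q.trace ^ 2 := (sq _).symm

end PosSemidef

end Matrix

/-- The Schatten 1/2-quasinorm `‖X‖_{1/2} = (Tr √X)²` is superadditive on
positive semidefinite matrices: `‖A + B‖_{1/2} ≥ ‖A‖_{1/2} + ‖B‖_{1/2}`. -/
theorem stmt_2 {n : Type*} [Fintype n] [DecidableEq n]
    (A B : Matrix n n ℂ) (hA : A.PosSemidef) (hB : B.PosSemidef)
    (hAB : (A + B).PosSemidef) :
    ((hA.sqrt.trace).re) ^ 2 + ((hB.sqrt.trace).re) ^ 2 ≤
      ((hAB.sqrt.trace).re) ^ 2 := by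
  have hf : Continuous fun ε : ℝ => (hAB.sqrt + (ε : ℂ) • 1).trace.re ^ 2 := by fun_prop
  simpa using ge_of_tendsto (hf.continuousWithinAt (s := Set.Ioi 0) (x := 0)).tendsto
    (eventually_nhdsWithin_of_forall fun ε hε =>
      hA.re_trace_sqrt_sq_add_re_trace_sqrt_sq_le hB hAB (Set.mem_Ioi.mp hε))
end

section
/- For p_± = 1/3 + x/6 ± (√3 y)/6 and p_3 = 1/3 − x/3, where x² + y² + z² = 1 (so p_±, p_3 ≥ 0 form a probability vector), the quantity √(p₊p₋) + √(p₊p₃) + √(p₋p₃) is bounded below by (1 + |z|)/2. -/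
/-!
Write `u, v, w` for the square roots of `p₊, p₋, p₃`, so that `u² + v² + w² = 1`. The sphere
condition becomes `z² = 12 (u²v² + u²w² + v²w²) − 3`, and two symmetric quartic inequalities
bound this by `(2s − 1)²` and, for nonnegative `u, v, w`, by `2s − 1`, where `s = uv + uw + vw`
is the sum of square roots in the theorem. Hence `|z| ≤ 2s − 1`.
-/

theorem twelve_mul_sum_sq_mul_sq_sub_le_sq (u v w : ℝ) :
    12 * (u^2 * v^2 + u^2 * w^2 + v^2 * w^2) - 3 * (u^2 + v^2 + w^2)^2
      ≤ (2 * (u * v + u * w + v * w) - (u^2 + v^2 + w^2))^2 := by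
  nlinarith [sq_nonneg (u - v), sq_nonneg (u - w), sq_nonneg (v - w), sq_nonneg (u + v - w),
    sq_nonneg (u - v + w), sq_nonneg (-u + v + w), sq_nonneg (u + v + w)]

theorem twelve_mul_sum_sq_mul_sq_sub_le_mul {u v w : ℝ} (hu : 0 ≤ u) (hv : 0 ≤ v) (hw : 0 ≤ w) :
    12 * (u^2 * v^2 + u^2 * w^2 + v^2 * w^2) - 3 * (u^2 + v^2 + w^2)^2
      ≤ (u^2 + v^2 + w^2) * (2 * (u * v + u * w + v * w) - (u^2 + v^2 + w^2)) := by
  nlinarith [mul_nonneg (mul_nonneg hu hv) hw, sq_nonneg (u - v), sq_nonneg (u - w),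
    sq_nonneg (v - w), sq_nonneg (u + v - w), sq_nonneg (u - v + w), sq_nonneg (-u + v + w),
    mul_nonneg hu hv, mul_nonneg hu hw, mul_nonneg hv hw, sq_nonneg (u + v + w)]

theorem abs_le_two_mul_sum_mul_sub_one {u v w t : ℝ} (hu : 0 ≤ u) (hv : 0 ≤ v) (hw : 0 ≤ w)
    (hsum : u^2 + v^2 + w^2 = 1) (ht : t^2 = 12 * (u^2 * v^2 + u^2 * w^2 + v^2 * w^2) - 3) :
    |t| ≤ 2 * (u * v + u * w + v * w) - 1 := by
  have hsq := twelve_mul_sum_sq_mul_sq_sub_le_sq u v w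
  have hlin := twelve_mul_sum_sq_mul_sq_sub_le_mul hu hv hw
  rw [hsum] at hsq hlin
  exact abs_le_of_sq_le_sq (by linarith) (by nlinarith [sq_nonneg t])

theorem abs_le_two_mul_sum_sqrt_mul_sub_one {a b c t : ℝ} (ha : 0 ≤ a) (hb : 0 ≤ b) (hc : 0 ≤ c)
    (habc : a + b + c = 1) (ht : t^2 = 12 * (a * b + a * c + b * c) - 3) :
    |t| ≤ 2 * (√(a * b) + √(a * c) + √(b * c)) - 1 := by
  rw [Real.sqrt_mul ha, Real.sqrt_mul ha, Real.sqrt_mul hb]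
  apply abs_le_two_mul_sum_mul_sub_one (Real.sqrt_nonneg a) (Real.sqrt_nonneg b)
    (Real.sqrt_nonneg c) <;>
  simpa only [Real.sq_sqrt ha, Real.sq_sqrt hb, Real.sq_sqrt hc]

/-- For `p± = 1/3 + x/6 ± √3 y/6`, `p₃ = 1/3 − x/3` with `x² + y² + z² = 1`
and all `p`'s nonnegative, `√(p₊p₋) + √(p₊p₃) + √(p₋p₃) ≥ (1 + |z|)/2`. -/
theorem stmt_12 (x y z : ℝ) (hsphere : x ^ 2 + y ^ 2 + z ^ 2 = 1)
    (hp : 0 ≤ 1/3 + x/6 + Real.sqrt 3 * y / 6)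
    (hm : 0 ≤ 1/3 + x/6 - Real.sqrt 3 * y / 6)
    (h3 : 0 ≤ 1/3 - x/3) :
    (1 + |z|) / 2 ≤
      Real.sqrt ((1/3 + x/6 + Real.sqrt 3 * y / 6) * (1/3 + x/6 - Real.sqrt 3 * y / 6))
      + Real.sqrt ((1/3 + x/6 + Real.sqrt 3 * y / 6) * (1/3 - x/3))
      + Real.sqrt ((1/3 + x/6 - Real.sqrt 3 * y / 6) * (1/3 - x/3)) := by
  have hsqrt3 : Real.sqrt 3 ^ 2 = 3 := Real.sq_sqrt (by norm_num)
  have hz := abs_le_two_mul_sum_sqrt_mul_sub_one (t := z) hp hm h3 (by ring)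
    (by linear_combination hsphere + (y ^ 2 / 3) * hsqrt3)
  linarith
end
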